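/- arXiv:1707.02689 — 8 statements merged into one kernel-verified Lean document; each statement's English description precedes it below -/
import Mathlib

section
/- Let ν₊, ν₋ be probability measures on ℝ with dν₊/dν₋(x) = e^x a.e., and let G₊, G₋ be their CDFs. Define D₊(x) = log((1 - G₊(-x))/(1 - G₋(-x))). Then D₊(x)/G₋(-x) → 1 as x → ∞. -/
/-!
Since `dν₊/dν₋ (t) = eᵗ ≤ e^{-x}` for `t ≤ -x`, we have `G₊(-x) ≤ e^{-x} G₋(-x)`,
so `G₊(-x) = o(G₋(-x))` while `G₋(-x) → 0`. As `log (1 - t) = -t + o(t)` at `0`,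
`D₊(x) = log (1 - G₊(-x)) - log (1 - G₋(-x)) = G₋(-x) + o(G₋(-x))`.
-/

open MeasureTheory Set Filter

open Asymptotics Topology

lemma measure_Iic_le_ofReal_exp_mul {μ ν : Measure ℝ} [μ.HaveLebesgueDecomposition ν]
    [SFinite ν] (hμν : μ ≪ ν)
    (hrn : ∀ᵐ x ∂ν, μ.rnDeriv ν x = ENNReal.ofReal (Real.exp x)) (a : ℝ) :
    μ (Iic a) ≤ ENNReal.ofReal (Real.exp a) * ν (Iic a) := by
  rw [← Measure.setLIntegral_rnDeriv hμν, ← setLIntegral_const]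
  refine setLIntegral_mono_ae measurable_const.aemeasurable ?_
  filter_upwards [hrn] with t ht hta
  rw [ht]
  exact ENNReal.ofReal_le_ofReal (Real.exp_le_exp.2 hta)

lemma measureReal_Iic_le_exp_mul {μ ν : Measure ℝ} [μ.HaveLebesgueDecomposition ν]
    [IsFiniteMeasure ν] (hμν : μ ≪ ν)
    (hrn : ∀ᵐ x ∂ν, μ.rnDeriv ν x = ENNReal.ofReal (Real.exp x)) (a : ℝ) :
    μ.real (Iic a) ≤ Real.exp a * ν.real (Iic a) := by
  rw [measureReal_def, measureReal_def, ← ENNReal.toReal_ofReal (Real.exp_pos a).le,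
    ← ENNReal.toReal_mul]
  exact ENNReal.toReal_mono (by finiteness) (measure_Iic_le_ofReal_exp_mul hμν hrn a)

lemma isLittleO_log_one_sub_add_self :
    (fun t : ℝ => Real.log (1 - t) + t) =o[𝓝 0] fun t => t := by
  have h : HasDerivAt (fun t : ℝ => Real.log (1 - t) + t) 0 0 := by
    simpa using
      (((hasDerivAt_id' (0 : ℝ)).const_sub 1).log (by norm_num)).fun_add (hasDerivAt_id' 0)
  simpa using h.isLittleO

lemma isBigO_log_one_sub : (fun t : ℝ => Real.log (1 - t)) =O[𝓝 0] fun t => t := by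
  have h : HasDerivAt (fun t : ℝ => Real.log (1 - t)) (-1) 0 := by
    simpa using ((hasDerivAt_id' (0 : ℝ)).const_sub 1).log (by norm_num)
  simpa using h.isBigO_sub

lemma Asymptotics.isLittleO_of_norm_le_mul {α : Type*} {l : Filter α} {ε f g : α → ℝ}
    (hε : Tendsto ε l (𝓝 0)) (h : ∀ᶠ x in l, ‖f x‖ ≤ ε x * ‖g x‖) :
    f =o[l] g := by
  have hεg : (fun x => ε x * g x) =o[l] g := by
    simpa using (isLittleO_one_iff ℝ |>.2 hε).mul_isBigO (isBigO_refl g l)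
  refine IsBigO.trans_isLittleO (IsBigO.of_bound 1 ?_) hεg
  filter_upwards [h] with x hx
  rw [one_mul, norm_mul]
  exact hx.trans (mul_le_mul_of_nonneg_right (Real.le_norm_self _) (norm_nonneg _))

theorem tendsto_log_one_sub_div_one_sub_div {α : Type*} {l : Filter α} {u v : α → ℝ}
    (hv : Tendsto v l (𝓝 0)) (huv : u =o[l] v) (hv0 : ∀ᶠ x in l, v x ≠ 0) :
    Tendsto (fun x => Real.log ((1 - u x) / (1 - v x)) / v x) l (𝓝 1) := by
  have hu : Tendsto u l (𝓝 0) := huv.trans_tendsto hv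
  have hlogu : (fun x => Real.log (1 - u x)) =o[l] v :=
    (isBigO_log_one_sub.comp_tendsto hu).trans_isLittleO huv
  have hlogv : (fun x => Real.log (1 - v x) + v x) =o[l] v :=
    isLittleO_log_one_sub_add_self.comp_tendsto hv
  have hlim := (hlogu.sub hlogv).tendsto_div_nhds_zero.add_const 1
  rw [zero_add] at hlim
  refine hlim.congr' ?_
  filter_upwards [hu.eventually_lt_const one_pos, hv.eventually_lt_const one_pos, hv0]
    with x hux hvx hvx0
  rw [Real.log_div (by linarith) (by linarith)]
  field_simp
  ring

theorem stmt_1_general (νp νm : Measure ℝ) [IsProbabilityMeasure νp] [IsProbabilityMeasure νm]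
    (hac : νp ≪ νm)
    (hrn : ∀ᵐ x ∂νm, νp.rnDeriv νm x = ENNReal.ofReal (Real.exp x))
    (Gp Gm : ℝ → ℝ)
    (hGp : ∀ x, Gp x = (νp (Iic x)).toReal)
    (hGm : ∀ x, Gm x = (νm (Iic x)).toReal)
    (hGmpos : ∀ x, 0 < Gm (-x)) :
    Tendsto (fun x => Real.log ((1 - Gp (-x)) / (1 - Gm (-x))) / Gm (-x))
      atTop (nhds 1) := by
  have hGm_cdf : Gm = ProbabilityTheory.cdf νm := funext fun x => by
    rw [hGm, ProbabilityTheory.cdf_eq_real, measureReal_def]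
  have hGm0 : Tendsto (fun x => Gm (-x)) atTop (𝓝 0) := by
    rw [hGm_cdf]
    exact (ProbabilityTheory.tendsto_cdf_atBot νm).comp tendsto_neg_atTop_atBot
  have hbound : ∀ x, ‖Gp (-x)‖ ≤ Real.exp (-x) * ‖Gm (-x)‖ := fun x => by
    rw [hGp, hGm, Real.norm_of_nonneg ENNReal.toReal_nonneg,
      Real.norm_of_nonneg ENNReal.toReal_nonneg]
    exact measureReal_Iic_le_exp_mul hac hrn (-x)
  refine tendsto_log_one_sub_div_one_sub_div hGm0 ?_ (.of_forall fun x => (hGmpos x).ne')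
  exact isLittleO_of_norm_le_mul Real.tendsto_exp_neg_atTop_nhds_zero (.of_forall hbound)

theorem stmt_1 (νp νm : Measure ℝ) [IsProbabilityMeasure νp] [IsProbabilityMeasure νm]
    (hac : νp ≪ νm) (hac' : νm ≪ νp)
    (hrn : ∀ᵐ x ∂νm, νp.rnDeriv νm x = ENNReal.ofReal (Real.exp x))
    (Gp Gm : ℝ → ℝ)
    (hGp : ∀ x, Gp x = (νp (Iic x)).toReal)
    (hGm : ∀ x, Gm x = (νm (Iic x)).toReal)
    (hGmpos : ∀ x, 0 < Gm (-x))
    (hGplt : ∀ x, Gp (-x) < 1) :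
    Tendsto (fun x => Real.log ((1 - Gp (-x)) / (1 - Gm (-x))) / Gm (-x))
      atTop (nhds 1) :=
  stmt_1_general νp νm hac hrn Gp Gm hGp hGm hGmpos
end

section
/- Let ν₊, ν₋ be probability measures on ℝ with dν₊/dν₋(x) = e^x a.e., with CDFs G₊, G₋. Define D₋(x) = log(G₊(-x)/G₋(-x)). Then D₋(x)/(G₊(-x) - 1) → 1 as x → -∞. -/
/-!
Write `log y = (y - 1) s(y)` with `s = dslope log 1`, continuous at `1` with `s 1 = 1`. Then
`D₋(x) / (G₊(-x) - 1) = s(G₊(-x)) - s(G₋(-x)) · (1 - G₋(-x)) / (1 - G₊(-x))`, and the last ratio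
is at most `e^x`: since `dν₊/dν₋ = eˣ`, we have `ν₊(t, ∞) ≥ eᵗ ν₋(t, ∞)`.
-/

open MeasureTheory Set Filter Real Topology ProbabilityTheory

theorem tendsto_log_div_div_sub_one {α : Type*} {l : Filter α} {f g : α → ℝ}
    (hf : Tendsto f l (𝓝 1)) (hg : Tendsto g l (𝓝 1)) (hf1 : ∀ᶠ a in l, f a ≠ 1)
    (hgf : Tendsto (fun a => (g a - 1) / (f a - 1)) l (𝓝 0)) :
    Tendsto (fun a => log (f a / g a) / (f a - 1)) l (𝓝 1) := by
  set s := dslope log 1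
  have hs : Tendsto s (𝓝 1) (𝓝 1) := by
    have hcont : ContinuousAt s 1 :=
      continuousAt_dslope_same.2 (differentiableAt_log one_ne_zero)
    simpa [s, dslope_same, deriv_log] using hcont.tendsto
  have hlog (y : ℝ) : log y = (y - 1) * s y := by
    simpa [s] using (sub_smul_dslope log 1 y).symm
  have hlim := (hs.comp hf).sub ((hs.comp hg).mul hgf)
  rw [mul_zero, sub_zero] at hlim
  refine hlim.congr' ?_
  filter_upwards [hf1, hf.eventually_ne one_ne_zero, hg.eventually_ne one_ne_zero]
    with a hf1 hf0 hg0
  have : f a - 1 ≠ 0 := sub_ne_zero.2 hf1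
  simp only [Function.comp_apply]
  rw [log_div hf0 hg0, hlog (f a), hlog (g a)]
  field_simp

theorem ofReal_exp_mul_measure_Ioi_le {μ ν : Measure ℝ} [μ.HaveLebesgueDecomposition ν]
    (hμν : μ ≪ ν) (hrn : ∀ᵐ x ∂ν, μ.rnDeriv ν x = ENNReal.ofReal (exp x)) (t : ℝ) :
    ENNReal.ofReal (exp t) * ν (Ioi t) ≤ μ (Ioi t) := by
  rw [← Measure.withDensity_rnDeriv_eq μ ν hμν, withDensity_apply _ measurableSet_Ioi,
    ← setLIntegral_const]
  refine setLIntegral_mono_ae (by fun_prop) ?_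
  filter_upwards [hrn] with x hx hxt
  rw [hx]
  exact ENNReal.ofReal_le_ofReal (exp_le_exp.2 (le_of_lt hxt))

theorem one_sub_cdf_eq_measureReal_Ioi (μ : Measure ℝ) [IsProbabilityMeasure μ] (t : ℝ) :
    1 - cdf μ t = μ.real (Ioi t) := by
  rw [cdf_eq_real, ← compl_Iic, probReal_compl_eq_one_sub measurableSet_Iic]

theorem one_sub_cdf_le_exp_neg_mul {μ ν : Measure ℝ} [IsProbabilityMeasure μ]
    [IsProbabilityMeasure ν] (hμν : μ ≪ ν)
    (hrn : ∀ᵐ x ∂ν, μ.rnDeriv ν x = ENNReal.ofReal (exp x)) (t : ℝ) :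
    1 - cdf ν t ≤ exp (-t) * (1 - cdf μ t) := by
  have h := ENNReal.toReal_mono (measure_ne_top μ _) (ofReal_exp_mul_measure_Ioi_le hμν hrn t)
  rw [ENNReal.toReal_mul, ENNReal.toReal_ofReal (exp_pos t).le] at h
  rw [one_sub_cdf_eq_measureReal_Ioi, one_sub_cdf_eq_measureReal_Ioi, exp_neg,
    inv_mul_eq_div, le_div_iff₀ (exp_pos t), mul_comm]
  exact h

theorem tendsto_cdf_sub_one_div_cdf_sub_one {μ ν : Measure ℝ} [IsProbabilityMeasure μ]
    [IsProbabilityMeasure ν] (hμν : μ ≪ ν)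
    (hrn : ∀ᵐ x ∂ν, μ.rnDeriv ν x = ENNReal.ofReal (exp x)) (hμ : ∀ t, cdf μ t < 1) :
    Tendsto (fun t => (cdf ν t - 1) / (cdf μ t - 1)) atTop (𝓝 0) := by
  have hnonneg (t : ℝ) : 0 ≤ (cdf ν t - 1) / (cdf μ t - 1) :=
    div_nonneg_of_nonpos (by linarith [cdf_le_one ν t]) (by linarith [hμ t])
  have hle (t : ℝ) : (cdf ν t - 1) / (cdf μ t - 1) ≤ exp (-t) := by
    rw [← neg_div_neg_eq, neg_sub, neg_sub, div_le_iff₀ (by linarith [hμ t])]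
    exact one_sub_cdf_le_exp_neg_mul hμν hrn t
  refine tendsto_of_tendsto_of_tendsto_of_le_of_le tendsto_const_nhds ?_ hnonneg hle
  exact tendsto_exp_atBot.comp tendsto_neg_atTop_atBot

theorem stmt_2_general (νp νm : Measure ℝ) [IsProbabilityMeasure νp] [IsProbabilityMeasure νm]
    (hac : νp ≪ νm)
    (hrn : ∀ᵐ x ∂νm, νp.rnDeriv νm x = ENNReal.ofReal (Real.exp x))
    (Gp Gm : ℝ → ℝ)
    (hGp : ∀ x, Gp x = (νp (Iic x)).toReal)
    (hGm : ∀ x, Gm x = (νm (Iic x)).toReal)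
    (hGp01 : ∀ x, 0 < Gp (-x) ∧ Gp (-x) < 1) :
    Tendsto (fun x => Real.log (Gp (-x) / Gm (-x)) / (Gp (-x) - 1))
      atBot (nhds 1) := by
  have hGp_cdf : Gp = cdf νp := funext fun t => by rw [hGp, cdf_eq_real, measureReal_def]
  have hGm_cdf : Gm = cdf νm := funext fun t => by rw [hGm, cdf_eq_real, measureReal_def]
  subst hGp_cdf hGm_cdf
  have hlt (t : ℝ) : cdf νp t < 1 := by simpa using (hGp01 (-t)).2
  exact (tendsto_log_div_div_sub_one (tendsto_cdf_atTop νp) (tendsto_cdf_atTop νm)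
    (Eventually.of_forall fun t => (hlt t).ne)
    (tendsto_cdf_sub_one_div_cdf_sub_one hac hrn hlt)).comp tendsto_neg_atBot_atTop

theorem stmt_2 (νp νm : Measure ℝ) [IsProbabilityMeasure νp] [IsProbabilityMeasure νm]
    (hac : νp ≪ νm) (hac' : νm ≪ νp)
    (hrn : ∀ᵐ x ∂νm, νp.rnDeriv νm x = ENNReal.ofReal (Real.exp x))
    (Gp Gm : ℝ → ℝ)
    (hGp : ∀ x, Gp x = (νp (Iic x)).toReal)
    (hGm : ∀ x, Gm x = (νm (Iic x)).toReal)
    (hGm01 : ∀ x, 0 < Gm (-x) ∧ Gm (-x) < 1)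
    (hGp01 : ∀ x, 0 < Gp (-x) ∧ Gp (-x) < 1) :
    Tendsto (fun x => Real.log (Gp (-x) / Gm (-x)) / (Gp (-x) - 1))
      atBot (nhds 1) :=
  stmt_2_general νp νm hac hrn Gp Gm hGp hGm hGp01
end

section
/- Let A, B : (0,∞) → (0,∞) be continuous functions that are eventually monotone decreasing and tend to zero at infinity, with A(x)/B(x) → 1 as x → ∞. Let (a_t) and (b_t) be sequences satisfying a_{t+1} = a_t + A(a_t) and b_{t+1} = b_t + B(b_t), both tending to infinity. Then a_t/b_t → 1 as t → ∞. -/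
open Filter Set

lemma key_aux (ε x₀ K : ℝ) (hε : 0 ≤ ε) (hx₀ : 0 < x₀)
    (A B : ℝ → ℝ)
    (hBanti : AntitoneOn B (Ici x₀))
    (hBnn : ∀ x, x₀ ≤ x → 0 ≤ B x)
    (hle : ∀ x, x₀ ≤ x → A x ≤ (1 + ε) * B x)
    (hAbd : ∀ x, x₀ ≤ x → A x ≤ K)
    (a b : ℕ → ℝ)
    (ha : ∀ t, x₀ ≤ a t) (hb : ∀ t, x₀ ≤ b t)
    (harec : ∀ t, a (t + 1) = a t + A (a t))
    (hbrec : ∀ t, b (t + 1) = b t + B (b t))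
    (hK : a 0 ≤ K) :
    ∀ t, a t ≤ (1 + ε) * b t + K := by
  intro t
  induction t with
  | zero =>
    have h0 : (0:ℝ) ≤ b 0 := le_trans hx₀.le (hb 0)
    nlinarith [mul_nonneg hε h0]
  | succ t ih =>
    have hbt1 : (0:ℝ) < b (t+1) := lt_of_lt_of_le hx₀ (hb (t+1))
    have hbmono : b t ≤ b (t+1) := by
      rw [hbrec t]; linarith [hBnn (b t) (hb t)]
    rcases le_or_gt (a t) (b t) with h | h
    · have h1 : A (a t) ≤ K := hAbd _ (ha t)
      rw [harec t]
      nlinarith [mul_nonneg hε hbt1.le]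
    · have h2 : A (a t) ≤ (1 + ε) * B (a t) := hle _ (ha t)
      have h3 : B (a t) ≤ B (b t) :=
        hBanti (mem_Ici.mpr (hb t)) (mem_Ici.mpr (ha t)) h.le
      rw [harec t, hbrec t]
      nlinarith [mul_nonneg (by linarith : (0:ℝ) ≤ 1 + ε)
        (by linarith : (0:ℝ) ≤ B (b t) - B (a t))]

theorem stmt_4 (A B : ℝ → ℝ)
    (hApos : ∀ x, 0 < x → 0 < A x) (hBpos : ∀ x, 0 < x → 0 < B x)
    (hAcont : ContinuousOn A (Ioi 0)) (hBcont : ContinuousOn B (Ioi 0))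
    (hAmono : ∃ x₀ > 0, AntitoneOn A (Ici x₀))
    (hBmono : ∃ x₀ > 0, AntitoneOn B (Ici x₀))
    (hA0 : Tendsto A atTop (nhds 0)) (hB0 : Tendsto B atTop (nhds 0))
    (hAB : Tendsto (fun x => A x / B x) atTop (nhds 1))
    (a b : ℕ → ℝ) (hapos : ∀ t, 0 < a t) (hbpos : ∀ t, 0 < b t)
    (harec : ∀ t, a (t + 1) = a t + A (a t))
    (hbrec : ∀ t, b (t + 1) = b t + B (b t))
    (hatop : Tendsto a atTop atTop) (hbtop : Tendsto b atTop atTop) :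
    Tendsto (fun t => a t / b t) atTop (nhds 1) := by
  rw [Metric.tendsto_atTop]
  intro ε hε
  obtain ⟨x₁, hx₁, hAanti⟩ := hAmono
  obtain ⟨x₂, hx₂, hBanti⟩ := hBmono
  set δ : ℝ := ε / 4 with hδdef
  have hδpos : 0 < δ := by positivity
  have hBA : Tendsto (fun x => B x / A x) atTop (nhds 1) := by
    have h := hAB.inv₀ one_ne_zero
    simp only [inv_one] at h
    refine h.congr (fun x => ?_)
    rw [inv_div]
  have h1 : ∀ᶠ x in atTop, A x / B x < 1 + δ :=
    hAB.eventually (gt_mem_nhds (by linarith))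
  have h2 : ∀ᶠ x in atTop, B x / A x < 1 + δ :=
    hBA.eventually (gt_mem_nhds (by linarith))
  obtain ⟨M, hM⟩ := eventually_atTop.mp (h1.and h2)
  set x₀ : ℝ := max M (max x₁ x₂) with hx₀def
  have hx₀pos : 0 < x₀ := lt_of_lt_of_le hx₁ (le_trans (le_max_left _ _) (le_max_right _ _))
  have hx₀x₁ : x₁ ≤ x₀ := le_trans (le_max_left _ _) (le_max_right _ _)
  have hx₀x₂ : x₂ ≤ x₀ := le_trans (le_max_right _ _) (le_max_right _ _)
  have hAanti' : AntitoneOn A (Ici x₀) := hAanti.mono (Ici_subset_Ici.mpr hx₀x₁)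
  have hBanti' : AntitoneOn B (Ici x₀) := hBanti.mono (Ici_subset_Ici.mpr hx₀x₂)
  have hApos' : ∀ x, x₀ ≤ x → 0 < A x := fun x hx => hApos x (lt_of_lt_of_le hx₀pos hx)
  have hBpos' : ∀ x, x₀ ≤ x → 0 < B x := fun x hx => hBpos x (lt_of_lt_of_le hx₀pos hx)
  have hleA : ∀ x, x₀ ≤ x → A x ≤ (1 + δ) * B x := by
    intro x hx
    have := (hM x (le_trans (le_max_left _ _) hx)).1
    have hBx := hBpos' x hx
    rw [div_lt_iff₀ hBx] at this
    linarith
  have hleB : ∀ x, x₀ ≤ x → B x ≤ (1 + δ) * A x := by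
    intro x hx
    have := (hM x (le_trans (le_max_left _ _) hx)).2
    have hAx := hApos' x hx
    rw [div_lt_iff₀ hAx] at this
    linarith
  obtain ⟨T, hT⟩ := eventually_atTop.mp
    ((hatop.eventually_ge_atTop x₀).and (hbtop.eventually_ge_atTop x₀))
  set K : ℝ := max (max (a T) (b T)) (max (A x₀) (B x₀)) with hKdef
  have hKa : a T ≤ K := le_trans (le_max_left _ _) (le_max_left _ _)
  have hKb : b T ≤ K := le_trans (le_max_right _ _) (le_max_left _ _)
  have hKpos : 0 < K := lt_of_lt_of_le (lt_of_lt_of_le hx₀pos (hT T le_rfl).1) hKa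
  have hAbd : ∀ x, x₀ ≤ x → A x ≤ K := by
    intro x hx
    exact le_trans (hAanti' (mem_Ici.mpr le_rfl) (mem_Ici.mpr hx) hx)
      (le_trans (le_max_left _ _) (le_max_right _ _))
  have hBbd : ∀ x, x₀ ≤ x → B x ≤ K := by
    intro x hx
    exact le_trans (hBanti' (mem_Ici.mpr le_rfl) (mem_Ici.mpr hx) hx)
      (le_trans (le_max_right _ _) (le_max_right _ _))
  have ha' : ∀ t, x₀ ≤ a (t + T) := fun t => (hT (t + T) (Nat.le_add_left _ _)).1
  have hb' : ∀ t, x₀ ≤ b (t + T) := fun t => (hT (t + T) (Nat.le_add_left _ _)).2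
  have hup : ∀ t, a (t + T) ≤ (1 + δ) * b (t + T) + K := by
    refine key_aux δ x₀ K hδpos.le hx₀pos A B hBanti'
      (fun x hx => (hBpos' x hx).le) hleA hAbd
      (fun t => a (t + T)) (fun t => b (t + T)) ha' hb' ?_ ?_ ?_
    · intro t
      show a (t + 1 + T) = a (t + T) + A (a (t + T))
      have h : t + 1 + T = (t + T) + 1 := by omega
      rw [h, harec (t + T)]
    · intro t
      show b (t + 1 + T) = b (t + T) + B (b (t + T))
      have h : t + 1 + T = (t + T) + 1 := by omega
      rw [h, hbrec (t + T)]
    · simpa using hKa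
  have hlo : ∀ t, b (t + T) ≤ (1 + δ) * a (t + T) + K := by
    refine key_aux δ x₀ K hδpos.le hx₀pos B A hAanti'
      (fun x hx => (hApos' x hx).le) hleB hBbd
      (fun t => b (t + T)) (fun t => a (t + T)) hb' ha' ?_ ?_ ?_
    · intro t
      show b (t + 1 + T) = b (t + T) + B (b (t + T))
      have h : t + 1 + T = (t + T) + 1 := by omega
      rw [h, hbrec (t + T)]
    · intro t
      show a (t + 1 + T) = a (t + T) + A (a (t + T))
      have h : t + 1 + T = (t + T) + 1 := by omega
      rw [h, harec (t + T)]
    · simpa using hKb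
  obtain ⟨N₁, hN₁⟩ := eventually_atTop.mp (hbtop.eventually_ge_atTop (4 * K / ε))
  refine ⟨max T N₁, fun n hn => ?_⟩
  have hnT : T ≤ n := le_trans (le_max_left _ _) hn
  have hnN₁ : N₁ ≤ n := le_trans (le_max_right _ _) hn
  have hbn : 0 < b n := hbpos n
  have han : 0 < a n := hapos n
  have heq : (n - T) + T = n := Nat.sub_add_cancel hnT
  have hup' : a n ≤ (1 + δ) * b n + K := by
    have := hup (n - T); rwa [heq] at this
  have hlo' : b n ≤ (1 + δ) * a n + K := by
    have := hlo (n - T); rwa [heq] at this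
  have hbK : 4 * K ≤ ε * b n := by
    have h := hN₁ n hnN₁
    rw [div_le_iff₀ hε] at h
    linarith [h]
  have hup2 : a n / b n < 1 + ε := by
    rw [div_lt_iff₀ hbn]
    nlinarith [mul_pos hε hbn]
  have hlo2 : 1 - ε < a n / b n := by
    rw [lt_div_iff₀ hbn]
    nlinarith [mul_pos hε hbn, mul_pos hε han, mul_pos (mul_pos hε hε) hbn]
  rw [Real.dist_eq, abs_sub_lt_iff]
  constructor <;> linarith
end

section
/- Let A : (0,∞) → (0,∞) be continuous with A(x) → 0 as x → ∞, and suppose A is convex and differentiable on some interval (x₀, ∞). Let (a_t) satisfy a_{t+1} = a_t + A(a_t) with a_t → ∞, and let f : (0,∞) → (0,∞) satisfy f'(t) = A(f(t)) for all sufficiently large t with f(t) → ∞. Then f(t)/a_t → 1 as t → ∞. -/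
open Filter Set Topology Asymptotics

/-!
A convex function with a finite limit at infinity is nonincreasing, and since its secant slopes
increase while `A (z + 1) - A z → 0`, for every `ε > 0` the map `x ↦ A x + ε x` is eventually
nondecreasing. In particular `x ↦ x + A x` is eventually nondecreasing, so the recurrence obeys a
comparison principle with sub- and supersolutions. The mean value theorem and these two
monotonicity facts give `f (n + 1) - f n ≤ A (f n) ≤ (1 + ε) (f (n + 1) - f n)` for large `n`, so
`n ↦ f n` is a subsolution and `n ↦ (1 + ε) f n + C` a supersolution, whence `f n ≤ a n + C` and
`a n ≤ (1 + ε) f n + C'` for large `n`; as `a n → ∞` this forces `f n / a n → 1`.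
-/

namespace ConvexOn

variable {A : ℝ → ℝ} {x₀ L : ℝ}

theorem antitoneOn_of_tendsto (hA : ConvexOn ℝ (Ioi x₀) A) (hlim : Tendsto A atTop (𝓝 L)) :
    AntitoneOn A (Ioi x₀) := by
  intro x hx y hy hxy
  by_contra! hlt
  have hxy' : x < y := hxy.lt_of_ne (by rintro rfl; exact hlt.false)
  have hs : 0 < slope A x y := by
    rw [slope_def_field]; exact div_pos (by linarith) (by linarith)
  have hgrow : ∀ z ≥ y, A x + slope A x y * (z - x) ≤ A z := fun z hz => by
    have hxz : x < z := hxy'.trans_le hz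
    have := hA.slope_mono hx ⟨hy, hxy'.ne'⟩ ⟨hx.trans hxz, hxz.ne'⟩ hz
    rw [slope_def_field A x z, le_div_iff₀ (sub_pos.2 hxz)] at this
    linarith
  have hlin : Tendsto (fun z => A x + slope A x y * (z - x)) atTop atTop :=
    tendsto_atTop_add_const_left _ _ ((tendsto_id.atTop_add tendsto_const_nhds).const_mul_atTop hs)
  exact not_tendsto_nhds_of_tendsto_atTop
    (tendsto_atTop_mono' _ ((eventually_ge_atTop y).mono hgrow) hlin) L hlim

theorem eventually_monotoneOn_add_mul (hA : ConvexOn ℝ (Ioi x₀) A) (hlim : Tendsto A atTop (𝓝 L))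
    {ε : ℝ} (hε : 0 < ε) : ∀ᶠ x₁ in atTop, MonotoneOn (fun x => A x + ε * x) (Ici x₁) := by
  have hstep : Tendsto (fun z => A (z + 1) - A z) atTop (𝓝 0) := by
    simpa using (hlim.comp (tendsto_atTop_add_const_right atTop 1 tendsto_id)).sub hlim
  obtain ⟨z, hz₀, hz⟩ := ((eventually_gt_atTop x₀).and
    (hstep.eventually (lt_mem_nhds (neg_lt_zero.2 hε)))).exists
  filter_upwards [eventually_ge_atTop (z + 1)] with x₁ hx₁ x hx y hy hxy
  rcases hxy.eq_or_lt with rfl | hlt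
  · rfl
  have hmem : ∀ w ≥ z, w ∈ Ioi x₀ := fun w hw => hz₀.trans_le hw
  have hx : z + 1 ≤ x := hx₁.trans hx
  have hslope : -ε ≤ slope A x y := calc
    -ε ≤ slope A z (z + 1) := by rw [slope_def_field]; simpa using hz.le
    _ ≤ slope A z y := hA.slope_mono (hmem z le_rfl) ⟨hmem _ (by linarith), by simp⟩
        ⟨hmem y (by linarith), by simp; linarith⟩ (by linarith)
    _ = slope A y z := slope_comm _ _ _
    _ ≤ slope A y x := hA.slope_mono (hmem y (by linarith)) ⟨hmem z le_rfl, by simp; linarith⟩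
        ⟨hmem x (by linarith), by simp; linarith⟩ (by linarith)
    _ = slope A x y := slope_comm _ _ _
  rw [slope_def_field, le_div_iff₀ (sub_pos.2 hlt)] at hslope
  linarith

end ConvexOn

theorem MonotoneOn.seq_le_seq_of_le {α : Type*} [Preorder α] {g : α → α} {s : Set α}
    (hg : MonotoneOn g s) {u v : ℕ → α} {N : ℕ} (hu : ∀ n ≥ N, u n ∈ s) (hv : ∀ n ≥ N, v n ∈ s)
    (hu' : ∀ n ≥ N, u (n + 1) ≤ g (u n)) (hv' : ∀ n ≥ N, g (v n) ≤ v (n + 1)) (h₀ : u N ≤ v N) :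
    ∀ n ≥ N, u n ≤ v n := by
  intro n hn
  induction n, hn using Nat.le_induction with
  | base => exact h₀
  | succ n hn ih => exact (hu' n hn).trans ((hg (hu n hn) (hv n hn) ih).trans (hv' n hn))

section Recurrence

variable {A : ℝ → ℝ} {x₁ : ℝ} {a u : ℕ → ℝ} {N : ℕ}

theorem exists_le_add_of_le_step (hanti : AntitoneOn A (Ici x₁))
    (hg : MonotoneOn (fun x => x + A x) (Ici x₁)) (harec : ∀ n, a (n + 1) = a n + A (a n))
    (ha : ∀ n ≥ N, a n ∈ Ici x₁) (hu : ∀ n ≥ N, u n ∈ Ici x₁)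
    (hstep : ∀ n ≥ N, u (n + 1) ≤ u n + A (u n)) :
    ∃ C, ∀ n ≥ N, u n ≤ a n + C := by
  set C := max (u N - a N) 0
  have hC : 0 ≤ C := le_max_right _ _
  have hv : ∀ n ≥ N, a n + C ∈ Ici x₁ := fun n hn => le_add_of_le_of_nonneg (ha n hn) hC
  refine ⟨C, hg.seq_le_seq_of_le hu hv hstep (fun n hn => ?_)
    (by linarith [le_max_left (u N - a N) 0])⟩
  have := hanti (ha n hn) (hv n hn) (le_add_of_nonneg_right hC)
  rw [harec]
  linarith

theorem exists_le_mul_add_of_step_le {ε : ℝ} (hε : 0 ≤ ε) (hanti : AntitoneOn A (Ici x₁))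
    (hg : MonotoneOn (fun x => x + A x) (Ici x₁)) (harec : ∀ n, a (n + 1) = a n + A (a n))
    (ha : ∀ n ≥ N, a n ∈ Ici x₁) (hu : ∀ n ≥ N, u n ∈ Ici x₁)
    (hstep : ∀ n ≥ N, A (u n) ≤ (1 + ε) * (u (n + 1) - u n)) :
    ∃ C, ∀ n ≥ N, a n ≤ (1 + ε) * u n + C := by
  set C := max (a N - (1 + ε) * u N) (-(ε * x₁))
  have hle : ∀ n ≥ N, u n ≤ (1 + ε) * u n + C := fun n hn => by
    have : ε * x₁ ≤ ε * u n := mul_le_mul_of_nonneg_left (hu n hn) hε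
    linarith [le_max_right (a N - (1 + ε) * u N) (-(ε * x₁))]
  have hv : ∀ n ≥ N, (1 + ε) * u n + C ∈ Ici x₁ := fun n hn => (hu n hn).trans (hle n hn)
  refine ⟨C, hg.seq_le_seq_of_le ha hv (fun n hn => (harec n).le) (fun n hn => ?_)
    (by linarith [le_max_left (a N - (1 + ε) * u N) (-(ε * x₁))])⟩
  have := hanti (hu n hn) (hv n hn) (hle n hn)
  linarith [hstep n hn]

end Recurrence

theorem step_bounds_of_hasDerivAt {A f : ℝ → ℝ} {x₁ T ε : ℝ} (hanti : AntitoneOn A (Ici x₁))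
    (hA : ∀ x ∈ Ici x₁, 0 ≤ A x) (hlip : MonotoneOn (fun x => A x + ε * x) (Ici x₁))
    (hf : ∀ t ≥ T, HasDerivAt f (A (f t)) t) (hfx₁ : ∀ t ≥ T, f t ∈ Ici x₁) {s : ℝ} (hs : T ≤ s) :
    f (s + 1) ≤ f s + A (f s) ∧ A (f s) ≤ (1 + ε) * (f (s + 1) - f s) := by
  have hmono : MonotoneOn f (Ici T) :=
    monotoneOn_of_hasDerivWithinAt_nonneg (convex_Ici T)
      (fun t ht => (hf t ht).continuousAt.continuousWithinAt)
      (fun t ht => (hf t (interior_subset ht)).hasDerivWithinAt)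
      (fun t ht => hA _ (hfx₁ t (interior_subset ht)))
  obtain ⟨c, hc, hslope⟩ := exists_hasDerivAt_eq_slope f (fun t => A (f t)) (lt_add_one s)
    (fun t ht => (hf t (hs.trans ht.1)).continuousAt.continuousWithinAt)
    (fun t ht => hf t (hs.trans ht.1.le))
  rw [add_sub_cancel_left, div_one] at hslope
  have hTc : T ≤ c := hs.trans hc.1.le
  have hsc : f s ≤ f c := hmono hs hTc hc.1.le
  have hcs : f c ≤ f (s + 1) := hmono hTc (show T ≤ s + 1 by linarith) hc.2.le
  have hup := hanti (hfx₁ s hs) (hfx₁ c hTc) hsc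
  have hdown := hanti (hfx₁ c hTc) (hfx₁ _ (by linarith)) hcs
  have hlip' : A (f s) + ε * f s ≤ A (f (s + 1)) + ε * f (s + 1) :=
    hlip (hfx₁ s hs) (hfx₁ _ (by linarith)) (hsc.trans hcs)
  constructor <;> linarith

theorem tendsto_div_of_le_add_of_le_mul_add {α : Type*} {l : Filter α} {u v : α → ℝ}
    (hv : Tendsto v l atTop) (hup : ∃ C, ∀ᶠ n in l, u n ≤ v n + C)
    (hlow : ∀ ε > 0, ∃ C, ∀ᶠ n in l, v n ≤ (1 + ε) * u n + C) :
    Tendsto (fun n => u n / v n) l (𝓝 1) := by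
  refine (isEquivalent_iff_tendsto_one (hv.eventually_ne_atTop 0)).1
    (isLittleO_iff.2 fun c hc => ?_)
  obtain ⟨C₁, h₁⟩ := hup
  obtain ⟨C₂, h₂⟩ := hlow (c / 2) (half_pos hc)
  filter_upwards [h₁, h₂, hv.eventually_ge_atTop 0, (hv.const_mul_atTop hc).eventually_ge_atTop C₁,
    (hv.const_mul_atTop (half_pos hc)).eventually_ge_atTop (c / 2 * C₁ + C₂)]
    with n h₁ h₂ hv₀ hvC₁ hvC₂
  have : c / 2 * u n ≤ c / 2 * (v n + C₁) := mul_le_mul_of_nonneg_left h₁ (half_pos hc).le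
  rw [Real.norm_eq_abs, Real.norm_eq_abs, abs_of_nonneg hv₀, Pi.sub_apply, abs_sub_le_iff]
  constructor <;> linarith

theorem stmt_5_general (A : ℝ → ℝ)
    (hA0 : Tendsto A atTop (nhds 0))
    (x₀ : ℝ) (hAconv : ConvexOn ℝ (Ioi x₀) A)
    (a : ℕ → ℝ)
    (harec : ∀ t, a (t + 1) = a t + A (a t))
    (hatop : Tendsto a atTop atTop)
    (f : ℝ → ℝ)
    (hode : ∃ t₁, ∀ t ≥ t₁, HasDerivAt f (A (f t)) t)
    (hftop : Tendsto f atTop atTop) :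
    Tendsto (fun t : ℕ => f t / a t) atTop (nhds 1) := by
  obtain ⟨t₁, hode⟩ := hode
  have key : ∀ ε > 0, (∃ C, ∀ᶠ n : ℕ in atTop, f n ≤ a n + C) ∧
      ∃ C, ∀ᶠ n : ℕ in atTop, a n ≤ (1 + ε) * f n + C := by
    intro ε hε
    obtain ⟨x₁, hx₁, hg, hlip⟩ := ((eventually_gt_atTop x₀).and
      ((hAconv.eventually_monotoneOn_add_mul hA0 one_pos).and
        (hAconv.eventually_monotoneOn_add_mul hA0 hε))).exists
    replace hg : MonotoneOn (fun x => x + A x) (Ici x₁) := by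
      simpa only [one_mul, add_comm] using hg
    have hanti : AntitoneOn A (Ici x₁) :=
      (hAconv.antitoneOn_of_tendsto hA0).mono (Ici_subset_Ioi.2 hx₁)
    have hA : ∀ x ∈ Ici x₁, 0 ≤ A x := fun x hx =>
      le_of_tendsto hA0 ((eventually_ge_atTop x).mono fun y hy => hanti hx (hx.trans hy) hy)
    obtain ⟨T, hT₁, hT⟩ : ∃ T ≥ t₁, ∀ t ≥ T, f t ∈ Ici x₁ := ((eventually_ge_atTop t₁).and
      (eventually_forall_ge_atTop.2 (hftop.eventually_ge_atTop x₁))).exists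
    obtain ⟨N, hNT, hN⟩ : ∃ N : ℕ, T ≤ N ∧ ∀ n ≥ N, a n ∈ Ici x₁ :=
      ((tendsto_natCast_atTop_atTop.eventually_ge_atTop T).and
        (eventually_forall_ge_atTop.2 (hatop.eventually_ge_atTop x₁))).exists
    have hfN : ∀ n ≥ N, f n ∈ Ici x₁ := fun n hn => hT _ (hNT.trans (Nat.cast_le.2 hn))
    have hstep (n : ℕ) (hn : n ≥ N) := step_bounds_of_hasDerivAt hanti hA hlip
      (fun t ht => hode t (hT₁.trans ht)) hT (hNT.trans (Nat.cast_le.2 hn))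
    obtain ⟨C₁, h₁⟩ := exists_le_add_of_le_step (u := fun n => f n) hanti hg harec hN hfN
      (fun n hn => by simpa using (hstep n hn).1)
    obtain ⟨C₂, h₂⟩ := exists_le_mul_add_of_step_le (u := fun n => f n) hε.le hanti hg harec hN hfN
      (fun n hn => by simpa using (hstep n hn).2)
    exact ⟨⟨C₁, eventually_atTop.2 ⟨N, h₁⟩⟩, ⟨C₂, eventually_atTop.2 ⟨N, h₂⟩⟩⟩
  exact tendsto_div_of_le_add_of_le_mul_add hatop (key 1 one_pos).1 fun ε hε => (key ε hε).2

theorem stmt_5 (A : ℝ → ℝ) (hApos : ∀ x, 0 < x → 0 < A x)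
    (hAcont : ContinuousOn A (Ioi 0))
    (hA0 : Tendsto A atTop (nhds 0))
    (x₀ : ℝ) (hAconv : ConvexOn ℝ (Ioi x₀) A) (hAdiff : DifferentiableOn ℝ A (Ioi x₀))
    (a : ℕ → ℝ) (hapos : ∀ t, 0 < a t)
    (harec : ∀ t, a (t + 1) = a t + A (a t))
    (hatop : Tendsto a atTop atTop)
    (f : ℝ → ℝ) (hfpos : ∀ t, 0 < t → 0 < f t)
    (hode : ∃ t₁, ∀ t ≥ t₁, HasDerivAt f (A (f t)) t)
    (hftop : Tendsto f atTop atTop) :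
    Tendsto (fun t : ℕ => f t / a t) atTop (nhds 1) :=
  stmt_5_general A hA0 x₀ hAconv a harec hatop f hode hftop
end

section
/- Let A : (0,∞) → (0,∞) be continuous, convex and differentiable on a tail, with A(x) → 0 at infinity. Let f solve f'(t) = A(f(t)) for t > t₀ with f increasing to infinity, and define B(x) = f(f⁻¹(x) + 1) − x for x in the range of f. Then B(x)/A(x) → 1 as x → ∞. -/
open Filter Set

theorem stmt_6 (A : ℝ → ℝ) (hApos : ∀ x, 0 < x → 0 < A x)
    (hAcont : ContinuousOn A (Ioi 0))
    (hA0 : Tendsto A atTop (nhds 0))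
    (x₁ : ℝ) (hAconv : ConvexOn ℝ (Ioi x₁) A) (hAdiff : DifferentiableOn ℝ A (Ioi x₁))
    (t₀ : ℝ) (f finv : ℝ → ℝ)
    (hfmono : StrictMonoOn f (Ioi t₀))
    (hode : ∀ t, t > t₀ → HasDerivAt f (A (f t)) t)
    (hftop : Tendsto f atTop atTop)
    (hinv : ∀ t, t > t₀ → finv (f t) = t)
    (hinv' : ∀ᶠ x in atTop, f (finv x) = x)
    (B : ℝ → ℝ) (hB : ∀ x, B x = f (finv x + 1) - x) :
    Tendsto (fun x => B x / A x) atTop (nhds 1) := by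
  -- differentiability of A at points of Ioi x₁
  have hdiff : ∀ x, x₁ < x → DifferentiableAt ℝ A x := fun x hx =>
    hAdiff.differentiableAt (Ioi_mem_nhds hx)
  have hx₂1 : x₁ < max x₁ 0 + 1 := lt_of_le_of_lt (le_max_left _ _) (lt_add_one _)
  have hx₂0 : (0:ℝ) < max x₁ 0 + 1 := lt_of_le_of_lt (le_max_right _ _) (lt_add_one _)
  -- the derivative of A is nonpositive on Ioi x₁
  have hderiv_nonpos : ∀ x, x₁ < x → deriv A x ≤ 0 := by
    intro x hx
    have hlim : Tendsto (fun y => (A y - A x) / (y - x)) atTop (nhds 0) :=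
      (hA0.sub_const (A x)).div_atTop (tendsto_atTop_add_const_right _ (-x) tendsto_id)
    refine ge_of_tendsto hlim ?_
    filter_upwards [eventually_gt_atTop x] with y hy
    have := hAconv.deriv_le_slope (hx : x ∈ Ioi x₁) (lt_trans hx hy : y ∈ Ioi x₁) hy (hdiff x hx)
    rwa [slope_def_field] at this
  -- A is antitone past x₁
  have hanti : ∀ x y, x₁ < x → x ≤ y → A y ≤ A x := by
    intro x y hx hxy
    rcases eq_or_lt_of_le hxy with rfl | hxy
    · exact le_rfl
    have hs := hAconv.slope_le_deriv (hx : x ∈ Ioi x₁) (lt_trans hx hxy : y ∈ Ioi x₁) hxy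
      (hdiff y (lt_trans hx hxy))
    rw [slope_def_field] at hs
    have hd : 0 < y - x := by linarith
    have h0 : (A y - A x) / (y - x) ≤ 0 := le_trans hs (hderiv_nonpos y (lt_trans hx hxy))
    have := (div_le_iff₀ hd).mp h0
    linarith
  -- deriv A tends to 0 at infinity
  have hderiv0 : Tendsto (fun x => deriv A x) atTop (nhds 0) := by
    have hlo : Tendsto (fun x => -A (x - 1)) atTop (nhds 0) := by
      rw [show (0:ℝ) = -0 by ring]
      exact (hA0.comp (tendsto_atTop_add_const_right _ (-1) tendsto_id)).neg
    have hhi : Tendsto (fun x => A (x + 1)) atTop (nhds 0) :=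
      hA0.comp (tendsto_atTop_add_const_right _ 1 tendsto_id)
    refine tendsto_of_tendsto_of_tendsto_of_le_of_le' hlo hhi ?_ ?_
    · filter_upwards [eventually_gt_atTop (max x₁ 0 + 1)] with x hx
      have hx1 : x₁ < x - 1 := by
        have := le_max_left x₁ (0:ℝ); linarith
      have hx0 : 0 < x := lt_trans hx₂0 hx
      have hs := hAconv.slope_le_deriv (hx1 : x - 1 ∈ Ioi x₁)
        (show x ∈ Ioi x₁ by simp only [mem_Ioi]; linarith) (by linarith) (hdiff x (by linarith))
      rw [slope_def_field] at hs
      have heq : (A x - A (x - 1)) / (x - (x - 1)) = A x - A (x - 1) := by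
        rw [show x - (x - 1) = (1:ℝ) by ring, div_one]
      rw [heq] at hs
      have hApos' : 0 ≤ A x := (hApos x hx0).le
      linarith
    · filter_upwards [eventually_gt_atTop (max x₁ 0 + 1)] with x hx
      have hx1 : x₁ < x := lt_trans hx₂1 hx
      have hx0 : 0 < x := lt_trans hx₂0 hx
      have hs := hAconv.deriv_le_slope (hx1 : x ∈ Ioi x₁)
        (show x + 1 ∈ Ioi x₁ by simp only [mem_Ioi]; linarith) (by linarith) (hdiff x hx1)
      rw [slope_def_field] at hs
      have heq : (A (x + 1) - A x) / (x + 1 - x) = A (x + 1) - A x := by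
        rw [show x + 1 - x = (1:ℝ) by ring, div_one]
      rw [heq] at hs
      have hApos' : 0 ≤ A x := (hApos x hx0).le
      linarith
  -- finv tends to infinity
  have htinv : Tendsto finv atTop atTop := by
    rw [tendsto_atTop]
    intro M
    have hM't : t₀ < max M (t₀ + 1) := lt_of_lt_of_le (lt_add_one _) (le_max_right _ _)
    filter_upwards [eventually_ge_atTop (f (max M (t₀ + 1)))] with x hx
    obtain ⟨T, hT1, hT2⟩ := ((hftop.eventually_ge_atTop x).and
      (eventually_ge_atTop (max M (t₀ + 1)))).exists
    have hcont : ContinuousOn f (Icc (max M (t₀ + 1)) T) := fun u hu =>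
      ((hode u (lt_of_lt_of_le hM't hu.1)).continuousAt).continuousWithinAt
    have hmem : x ∈ Icc (f (max M (t₀ + 1))) (f T) := ⟨hx, hT1⟩
    obtain ⟨t, ht, hft⟩ := intermediate_value_Icc hT2 hcont hmem
    have htt₀ : t₀ < t := lt_of_lt_of_le hM't ht.1
    have heq : finv x = t := by rw [← hft, hinv t htt₀]
    rw [heq]
    exact le_trans (le_max_left _ _) ht.1
  -- the key two-sided bound
  have hkey : ∀ᶠ t in atTop, 1 + deriv A (f t) ≤ (f (t + 1) - f t) / A (f t) ∧
      (f (t + 1) - f t) / A (f t) ≤ 1 := by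
    filter_upwards [eventually_gt_atTop t₀, hftop.eventually_gt_atTop (max x₁ 0 + 1)]
      with t ht hft
    -- mean value theorem on [t, t+1]
    have hcont : ContinuousOn f (Icc t (t + 1)) := fun u hu =>
      ((hode u (lt_of_lt_of_le ht hu.1)).continuousAt).continuousWithinAt
    have hd : ∀ u ∈ Ioo t (t + 1), HasDerivAt f (A (f u)) u := fun u hu =>
      hode u (lt_trans ht hu.1)
    obtain ⟨ξ, hξ, hξeq⟩ := exists_hasDerivAt_eq_slope f (fun u => A (f u))
      (by linarith : t < t + 1) hcont hd
    have hξeq' : A (f ξ) = f (t + 1) - f t := by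
      rw [hξeq, show t + 1 - t = (1:ℝ) by ring, div_one]
    have htξ : t < ξ := hξ.1
    have hξt1 : ξ < t + 1 := hξ.2
    have hfmem : ∀ u, t ≤ u → t₀ < u := fun u hu => lt_of_lt_of_le ht hu
    have hftξ : f t < f ξ := hfmono (mem_Ioi.mpr ht) (mem_Ioi.mpr (hfmem ξ htξ.le)) htξ
    have hfξt1 : f ξ < f (t + 1) := hfmono (mem_Ioi.mpr (hfmem ξ htξ.le))
      (mem_Ioi.mpr (hfmem (t+1) (by linarith))) hξt1
    have hft1 : x₁ < f t := lt_trans hx₂1 hft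
    have hft0 : 0 < f t := lt_trans hx₂0 hft
    have hAft : 0 < A (f t) := hApos _ hft0
    -- upper bound: A (f ξ) ≤ A (f t)
    have hub : A (f ξ) ≤ A (f t) := hanti _ _ hft1 hftξ.le
    have hdle : f (t + 1) - f t ≤ A (f t) := by rw [← hξeq']; exact hub
    have hdpos : 0 < f (t + 1) - f t := by
      rw [← hξeq']; exact hApos _ (lt_trans hft0 hftξ)
    -- tangent line inequality
    have hs := hAconv.deriv_le_slope (hft1 : f t ∈ Ioi x₁)
      (show f (t+1) ∈ Ioi x₁ from lt_trans hft1 (lt_trans hftξ hfξt1))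
      (lt_trans hftξ hfξt1) (hdiff _ hft1)
    rw [slope_def_field] at hs
    have htangent : deriv A (f t) * (f (t + 1) - f t) ≤ A (f (t + 1)) - A (f t) :=
      (le_div_iff₀ hdpos).mp hs
    have hAξt1 : A (f (t + 1)) ≤ A (f ξ) := hanti _ _ (lt_trans hft1 hftξ) hfξt1.le
    have hdneg : deriv A (f t) ≤ 0 := hderiv_nonpos _ hft1
    constructor
    · rw [le_div_iff₀ hAft]
      nlinarith
    · rw [div_le_one hAft]
      exact hdle
  -- squeeze
  have hg : Tendsto (fun t => (f (t + 1) - f t) / A (f t)) atTop (nhds 1) := by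
    have hlo : Tendsto (fun t => 1 + deriv A (f t)) atTop (nhds 1) := by
      have := (hderiv0.comp hftop).const_add 1
      simpa using this
    exact tendsto_of_tendsto_of_tendsto_of_le_of_le' hlo tendsto_const_nhds
      (hkey.mono fun t h => h.1) (hkey.mono fun t h => h.2)
  -- conclude via finv
  refine (hg.comp htinv).congr' ?_
  filter_upwards [hinv'] with x hx
  simp only [Function.comp_apply, hB, hx]
end

section
/- Suppose G₋ is a CDF on ℝ with 0 < G₋(-x) < 1 for all x, convex and differentiable on a left tail, and G₊ is the CDF with density e^x relative to the measure of G₋. Then the map u₊(x) = x + log((1−G₊(−x))/(1−G₋(−x))) is monotone increasing on some interval (x₀, ∞). -/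
open MeasureTheory Set Filter

theorem stmt_8 (νp νm : Measure ℝ) [IsProbabilityMeasure νp] [IsProbabilityMeasure νm]
    (hac : νp ≪ νm) (hac' : νm ≪ νp)
    (hrn : ∀ᵐ x ∂νm, νp.rnDeriv νm x = ENNReal.ofReal (Real.exp x))
    (Gp Gm : ℝ → ℝ)
    (hGp : ∀ x, Gp x = (νp (Iic x)).toReal)
    (hGm : ∀ x, Gm x = (νm (Iic x)).toReal)
    (hGm01 : ∀ x, 0 < Gm x ∧ Gm x < 1)
    (x₁ : ℝ) (hconv : ConvexOn ℝ (Iio (-x₁)) Gm)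
    (hdiff : DifferentiableOn ℝ Gm (Iio (-x₁))) :
    ∃ x₀ : ℝ, StrictMonoOn (fun x => x + Real.log ((1 - Gp (-x)) / (1 - Gm (-x)))) (Ioi x₀) := by
  -- Monotonicity of the CDFs
  have hGm_mono : Monotone Gm := by
    intro u v huv
    rw [hGm, hGm]
    exact ENNReal.toReal_mono (measure_ne_top νm _) (measure_mono (Iic_subset_Iic.2 huv))
  have hGp_mono : Monotone Gp := by
    intro u v huv
    rw [hGp, hGp]
    exact ENNReal.toReal_mono (measure_ne_top νp _) (measure_mono (Iic_subset_Iic.2 huv))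
  -- Gp < 1 everywhere
  have hGp_lt_one : ∀ t, Gp t < 1 := by
    intro t
    have hm_lt : νm (Iic t) ≠ 1 := by
      intro h1
      have : Gm t = 1 := by rw [hGm, h1, ENNReal.toReal_one]
      exact absurd this (ne_of_lt (hGm01 t).2)
    have hmIoi : νm (Ioi t) ≠ 0 := by
      intro h0
      apply hm_lt
      have hc := prob_compl_eq_one_sub (μ := νm) (measurableSet_Ioi (a := t))
      rw [compl_Ioi] at hc
      rw [hc, h0, tsub_zero]
    have hpIoi : νp (Ioi t) ≠ 0 := fun h0 => hmIoi (hac' h0)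
    have hp_lt : νp (Iic t) ≠ 1 := by
      intro h1
      apply hpIoi
      have hc := prob_compl_eq_one_sub (μ := νp) (measurableSet_Iic (a := t))
      rw [compl_Iic] at hc
      rw [hc, h1, tsub_self]
    have hle : νp (Iic t) ≤ 1 := prob_le_one
    have : νp (Iic t) < 1 := lt_of_le_of_ne hle hp_lt
    rw [hGp]
    have h := ENNReal.toReal_strict_mono ENNReal.one_ne_top this
    simpa using h
  have hGp_nonneg : ∀ t, 0 ≤ Gp t := fun t => by rw [hGp]; exact ENNReal.toReal_nonneg
  -- set up constants
  set A : ℝ := Gm (-x₁ - 1) with hA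
  set c : ℝ := 1 - Gm (-x₁ - 2) with hc
  have hApos : 0 < A := (hGm01 _).1
  have hcpos : 0 < c := by
    have := (hGm01 (-x₁ - 2)).2
    linarith
  refine ⟨x₁ + 2 + A / c, ?_⟩
  have hAc_nonneg : 0 ≤ A / c := le_of_lt (div_pos hApos hcpos)
  intro x hx y hy hxy
  simp only [mem_Ioi] at hx hy
  have hx2 : x₁ + 2 < x := by linarith
  have hy2 : x₁ + 2 < y := by linarith
  -- positivity facts
  have hSmx : 0 < 1 - Gm (-x) := by have := (hGm01 (-x)).2; linarith
  have hSmy : 0 < 1 - Gm (-y) := by have := (hGm01 (-y)).2; linarith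
  have hSpx : 0 < 1 - Gp (-x) := by have := hGp_lt_one (-x); linarith
  have hSpy : 0 < 1 - Gp (-y) := by have := hGp_lt_one (-y); linarith
  -- 1 - Gm(-x) ≥ c
  have hSmx_ge : c ≤ 1 - Gm (-x) := by
    have : Gm (-x) ≤ Gm (-x₁ - 2) := hGm_mono (by linarith)
    rw [hc]; linarith
  -- convexity slope bound
  have hslope := hconv.slope_mono_adjacent (x := -y) (y := -x) (z := -x₁ - 1)
    (by simp only [mem_Iio]; linarith) (by simp only [mem_Iio]; linarith)
    (by linarith) (by linarith)
  -- hslope : (Gm (-x) - Gm (-y)) / (-x - -y) ≤ (Gm (-x₁-1) - Gm (-x)) / (-x₁-1 - -x)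
  have hden1 : (0:ℝ) < -x - -y := by linarith
  have hden2 : (0:ℝ) < -x₁ - 1 - -x := by linarith
  have hslope2 : (Gm (-x₁ - 1) - Gm (-x)) / (-x₁ - 1 - -x) < c := by
    rw [div_lt_iff₀ hden2]
    have h1 : Gm (-x₁ - 1) - Gm (-x) ≤ A := by
      have := (hGm01 (-x)).1; rw [hA]; linarith
    have h2 : A < c * (-x₁ - 1 - -x) := by
      have : A / c < -x₁ - 1 - -x := by
        have : A / c < x - x₁ - 1 := by linarith
        linarith
      calc A = c * (A / c) := by field_simp
        _ < c * (-x₁ - 1 - -x) := by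
          exact mul_lt_mul_of_pos_left this hcpos
    linarith
  have hkey : Gm (-x) - Gm (-y) < (1 - Gm (-x)) * (y - x) := by
    have h3 : (Gm (-x) - Gm (-y)) / (-x - -y) < c := lt_of_le_of_lt hslope hslope2
    have h4 : Gm (-x) - Gm (-y) < c * (-x - -y) := by
      rw [div_lt_iff₀ hden1] at h3; linarith
    have h5 : c * (-x - -y) ≤ (1 - Gm (-x)) * (y - x) := by
      have : -x - -y = y - x := by ring
      rw [this]
      exact mul_le_mul_of_nonneg_right hSmx_ge (by linarith)
    linarith
  -- main estimate: 1 - Gm(-y) < (1 - Gm(-x)) * exp (y - x)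
  have hexp : y - x ≤ Real.exp (y - x) - 1 := by
    have := Real.add_one_le_exp (y - x); linarith
  have hmain : 1 - Gm (-y) < (1 - Gm (-x)) * Real.exp (y - x) := by
    have : (1 - Gm (-x)) * (y - x) ≤ (1 - Gm (-x)) * (Real.exp (y - x) - 1) :=
      mul_le_mul_of_nonneg_left hexp (le_of_lt hSmx)
    nlinarith
  -- take logs
  have hlogm : Real.log (1 - Gm (-y)) - Real.log (1 - Gm (-x)) < y - x := by
    have h6 : Real.log (1 - Gm (-y)) < Real.log ((1 - Gm (-x)) * Real.exp (y - x)) :=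
      Real.log_lt_log hSmy hmain
    rw [Real.log_mul (ne_of_gt hSmx) (ne_of_gt (Real.exp_pos _)), Real.log_exp] at h6
    linarith
  have hlogp : Real.log (1 - Gp (-x)) ≤ Real.log (1 - Gp (-y)) := by
    apply Real.log_le_log hSpx
    have : Gp (-y) ≤ Gp (-x) := hGp_mono (by linarith)
    linarith
  simp only
  rw [Real.log_div (ne_of_gt hSpx) (ne_of_gt hSmx),
      Real.log_div (ne_of_gt hSpy) (ne_of_gt hSmy)]
  linarith
end

section
/- If G₋(-x) = e^{-x} for all x > x₀, then any solution f of f'(t) = G₋(-f(t)) on a tail, with f → ∞, satisfies f(t) − log t → c for some constant c; in particular f(t)/log t → 1. -/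
/-! Once `f > x₀`, the equation reads `f' = exp (-f)`, i.e. `(exp ∘ f)' = 1`, so
`exp (f t) = t + C` on a tail and `f t = log (t + C)`, which differs from `log t` by `o(1)`. -/

open Filter Set Topology

theorem exp_comp_eq_add_const_of_hasDerivAt {f : ℝ → ℝ} {a : ℝ}
    (hf : ∀ t ≥ a, HasDerivAt f (Real.exp (-f t)) t) :
    ∃ C, ∀ t ≥ a, Real.exp (f t) = t + C := by
  have hderiv : ∀ t ≥ a, HasDerivAt (fun s => Real.exp (f s) - s) 0 t := by
    intro t ht
    have hexp := (hf t ht).exp.sub (hasDerivAt_id' t)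
    rwa [← Real.exp_add, add_neg_cancel, Real.exp_zero, sub_self] at hexp
  refine ⟨Real.exp (f a) - a, fun t ht => ?_⟩
  have hconst := constant_of_has_deriv_right_zero (a := a) (b := t)
    (fun s hs => (hderiv s hs.1).continuousAt.continuousWithinAt)
    (fun s hs => (hderiv s hs.1).hasDerivWithinAt) t (right_mem_Icc.mpr ht)
  linarith

theorem tendsto_div_nhds_one_of_tendsto_sub {α : Type*} {l : Filter α} {g u : α → ℝ} {c : ℝ}
    (hu : Tendsto u l atTop) (hgu : Tendsto (fun x => g x - u x) l (𝓝 c)) :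
    Tendsto (fun x => g x / u x) l (𝓝 1) := by
  have hsum : Tendsto (fun x => (g x - u x) * (u x)⁻¹ + 1) l (𝓝 1) := by
    simpa using (hgu.mul hu.inv_tendsto_atTop).add_const 1
  refine hsum.congr' ?_
  filter_upwards [hu.eventually_ne_atTop 0] with x hx
  field_simp
  ring

theorem stmt_9_general (Gm : ℝ → ℝ) (x₀ : ℝ)
    (hGm : ∀ x, x > x₀ → Gm (-x) = Real.exp (-x))
    (f : ℝ → ℝ)
    (hode : ∃ t₁, ∀ t ≥ t₁, HasDerivAt f (Gm (-f t)) t)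
    (hftop : Tendsto f atTop atTop) :
    (∃ c : ℝ, Tendsto (fun t => f t - Real.log t) atTop (nhds c)) ∧
      Tendsto (fun t => f t / Real.log t) atTop (nhds 1) := by
  obtain ⟨t₁, hode⟩ := hode
  obtain ⟨t₂, hf_gt⟩ := eventually_atTop.mp (hftop.eventually_gt_atTop x₀)
  have hode_exp : ∀ t ≥ max t₁ t₂, HasDerivAt f (Real.exp (-f t)) t := fun t ht => by
    rw [← hGm _ (hf_gt t (le_of_max_le_right ht))]
    exact hode t (le_of_max_le_left ht)
  obtain ⟨C, hC⟩ := exp_comp_eq_add_const_of_hasDerivAt hode_exp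
  have hlim : Tendsto (fun t => f t - Real.log t) atTop (𝓝 0) := by
    refine (Real.tendsto_log_comp_add_sub_log C).congr' ?_
    filter_upwards [eventually_ge_atTop (max t₁ t₂)] with t ht
    rw [← hC t ht, Real.log_exp]
  exact ⟨⟨0, hlim⟩, tendsto_div_nhds_one_of_tendsto_sub Real.tendsto_log_atTop hlim⟩

theorem stmt_9 (Gm : ℝ → ℝ) (x₀ : ℝ)
    (hGm : ∀ x, x > x₀ → Gm (-x) = Real.exp (-x))
    (f : ℝ → ℝ) (hfpos : ∀ t, 0 < t → 0 < f t)
    (hode : ∃ t₁, ∀ t ≥ t₁, HasDerivAt f (Gm (-f t)) t)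
    (hftop : Tendsto f atTop atTop) :
    (∃ c : ℝ, Tendsto (fun t => f t - Real.log t) atTop (nhds c)) ∧
      Tendsto (fun t => f t / Real.log t) atTop (nhds 1) :=
  stmt_9_general Gm x₀ hGm f hode hftop
end

section
/- Let Φ̄ denote the upper tail of the standard normal distribution, Φ̄(x) = ∫_x^∞ (1/√(2π)) e^{-ζ²/2} dζ. If f : (0,∞) → (0,∞) is differentiable with f'(t) = Φ̄(f(t)) for all sufficiently large t and f(t) → ∞, then f(t)/√(2 log t) → 1 as t → ∞. -/
open Filter Set Real MeasureTheory Topology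

/-!
With `H t = exp (f t ^ 2 / 2)` the equation gives `H' = f Φ̄(f) exp (f² / 2)`, and the Mills-ratio
bounds `e^{-3/2} e^{-x²/2} ≤ x ∫_x^∞ e^{-ζ²/2} dζ ≤ e^{-x²/2}` (for `x ≥ 1`) pin `H'` between two
positive constants once `f ≥ 1`. Hence `H` grows linearly, so `f² / 2 = log H ∼ log t`.
-/

lemma integrable_exp_neg_sq_div_two : Integrable fun ζ : ℝ => exp (-ζ ^ 2 / 2) := by
  convert integrable_exp_neg_mul_sq (b := 1 / 2) (by norm_num) using 3 with ζ
  ring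

lemma hasDerivAt_neg_exp_neg_sq_div_two (ζ : ℝ) :
    HasDerivAt (fun ζ : ℝ => -exp (-ζ ^ 2 / 2)) (ζ * exp (-ζ ^ 2 / 2)) ζ := by
  refine ((hasDerivAt_pow 2 ζ).fun_neg.div_const 2).exp.fun_neg.congr_deriv ?_
  push_cast
  ring

lemma tendsto_neg_exp_neg_sq_div_two_atTop :
    Tendsto (fun ζ : ℝ => -exp (-ζ ^ 2 / 2)) atTop (𝓝 0) := by
  rw [← neg_zero]
  refine (tendsto_exp_atBot.comp (Tendsto.atBot_div_const two_pos ?_)).neg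
  exact tendsto_neg_atBot_iff.mpr (tendsto_pow_atTop two_ne_zero)

lemma integral_Ioi_mul_exp_neg_sq_div_two {x : ℝ} (hx : 0 ≤ x) :
    ∫ ζ in Ioi x, ζ * exp (-ζ ^ 2 / 2) = exp (-x ^ 2 / 2) := by
  rw [integral_Ioi_of_hasDerivAt_of_nonneg' (fun ζ _ => hasDerivAt_neg_exp_neg_sq_div_two ζ)
    (fun ζ hζ => mul_nonneg (hx.trans hζ.out.le) (exp_nonneg _))
    tendsto_neg_exp_neg_sq_div_two_atTop]
  ring

lemma mul_integral_Ioi_exp_neg_sq_div_two_le {x : ℝ} (hx : 0 ≤ x) :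
    x * ∫ ζ in Ioi x, exp (-ζ ^ 2 / 2) ≤ exp (-x ^ 2 / 2) := by
  rw [← integral_Ioi_mul_exp_neg_sq_div_two hx, ← integral_const_mul]
  refine setIntegral_mono_on (integrable_exp_neg_sq_div_two.integrableOn.const_mul x) ?_
    measurableSet_Ioi fun ζ hζ => mul_le_mul_of_nonneg_right hζ.out.le (exp_nonneg _)
  exact integrableOn_Ioi_deriv_of_nonneg' (fun ζ _ => hasDerivAt_neg_exp_neg_sq_div_two ζ)
    (fun ζ hζ => mul_nonneg (hx.trans hζ.out.le) (exp_nonneg _))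
    tendsto_neg_exp_neg_sq_div_two_atTop

/-- The integrand is at least `e^{-3/2} e^{-x²/2}` on `(x, x + 1/x]`, an interval of length `1/x`. -/
lemma exp_neg_three_halves_mul_le_mul_integral_Ioi {x : ℝ} (hx : 1 ≤ x) :
    exp (-3 / 2) * exp (-x ^ 2 / 2) ≤ x * ∫ ζ in Ioi x, exp (-ζ ^ 2 / 2) := by
  have hx₀ : 0 < x := one_pos.trans_le hx
  have hbound : ∀ ζ ∈ Ioc x (x + 1 / x), exp (-3 / 2) * exp (-x ^ 2 / 2) ≤ exp (-ζ ^ 2 / 2) := by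
    rintro ζ ⟨hxζ, hζ⟩
    rw [← exp_add, exp_le_exp]
    have hinv : 1 / x ≤ 1 := by rw [div_le_one hx₀]; exact hx
    have hinv₀ : 0 < 1 / x := by positivity
    have hx_inv : x * (1 / x) = 1 := by field_simp
    nlinarith [mul_le_mul hζ hζ (hx₀.trans hxζ).le (by positivity)]
  have hvol : volume.real (Ioc x (x + 1 / x)) = 1 / x := by
    rw [measureReal_def, volume_Ioc, add_sub_cancel_left, ENNReal.toReal_ofReal (by positivity)]
  calc exp (-3 / 2) * exp (-x ^ 2 / 2)
      = x * (exp (-3 / 2) * exp (-x ^ 2 / 2) * volume.real (Ioc x (x + 1 / x))) := by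
        rw [hvol]; field_simp
    _ ≤ x * ∫ ζ in Ioc x (x + 1 / x), exp (-ζ ^ 2 / 2) :=
        mul_le_mul_of_nonneg_left (setIntegral_ge_of_const_le_real measurableSet_Ioc
          measure_Ioc_lt_top.ne hbound integrable_exp_neg_sq_div_two.integrableOn) hx₀.le
    _ ≤ x * ∫ ζ in Ioi x, exp (-ζ ^ 2 / 2) :=
        mul_le_mul_of_nonneg_left (setIntegral_mono_set integrable_exp_neg_sq_div_two.integrableOn
          (Eventually.of_forall fun ζ => exp_nonneg _) Ioc_subset_Ioi_self.eventuallyLE) hx₀.le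

lemma mul_exp_mul_integral_Ioi_mem_Icc {x : ℝ} (hx : 1 ≤ x) :
    x * exp (x ^ 2 / 2) * ∫ ζ in Ioi x, exp (-ζ ^ 2 / 2) ∈ Icc (exp (-3 / 2)) 1 := by
  have hcancel : exp (-x ^ 2 / 2) * exp (x ^ 2 / 2) = 1 := by rw [← exp_add]; simp [neg_div]
  rw [mul_right_comm]
  constructor
  · calc exp (-3 / 2) = exp (-3 / 2) * exp (-x ^ 2 / 2) * exp (x ^ 2 / 2) := by
          rw [mul_assoc, hcancel, mul_one]
      _ ≤ _ := mul_le_mul_of_nonneg_right (exp_neg_three_halves_mul_le_mul_integral_Ioi hx)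
          (exp_nonneg _)
  · calc _ ≤ exp (-x ^ 2 / 2) * exp (x ^ 2 / 2) := mul_le_mul_of_nonneg_right
          (mul_integral_Ioi_exp_neg_sq_div_two_le (zero_le_one.trans hx)) (exp_nonneg _)
      _ = 1 := hcancel

lemma tendsto_log_const_mul_div_log {c : ℝ} (hc : 0 < c) :
    Tendsto (fun t => log (c * t) / log t) atTop (𝓝 1) := by
  have h : Tendsto (fun t => log c / log t + 1) atTop (𝓝 (0 + 1)) :=
    (tendsto_const_nhds.div_atTop tendsto_log_atTop).add_const 1
  rw [zero_add] at h
  refine h.congr' ?_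
  filter_upwards [eventually_gt_atTop 1] with t ht
  rw [log_mul hc.ne' (by positivity), add_div, div_self (log_pos ht).ne']

lemma tendsto_log_div_log_of_linear_bounds {g : ℝ → ℝ} {a b : ℝ} (ha : 0 < a)
    (hlow : ∀ᶠ t in atTop, a * t ≤ g t) (hup : ∀ᶠ t in atTop, g t ≤ b * t) :
    Tendsto (fun t => log (g t) / log t) atTop (𝓝 1) := by
  have hb : 0 < b := by
    obtain ⟨t, hl, hu, ht⟩ := (hlow.and (hup.and (eventually_gt_atTop 0))).exists
    nlinarith
  refine tendsto_of_tendsto_of_tendsto_of_le_of_le' (tendsto_log_const_mul_div_log ha)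
    (tendsto_log_const_mul_div_log hb) ?_ ?_
  · filter_upwards [hlow, eventually_gt_atTop 1] with t hl ht
    exact div_le_div_of_nonneg_right (log_le_log (by positivity) hl) (log_pos ht).le
  · filter_upwards [hlow, hup, eventually_gt_atTop 1] with t hl hu ht
    exact div_le_div_of_nonneg_right (log_le_log (by nlinarith) hu) (log_pos ht).le

lemma linear_bounds_of_deriv_mem_Icc {H H' : ℝ → ℝ} {a b : ℝ} (ha : 0 < a)
    (hH : ∀ᶠ t in atTop, HasDerivAt H (H' t) t ∧ H' t ∈ Icc a b) :
    (∀ᶠ t in atTop, a / 2 * t ≤ H t) ∧ ∀ᶠ t in atTop, H t ≤ (b + 1) * t := by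
  obtain ⟨T, hT⟩ := eventually_atTop.mp hH
  have hcont : ContinuousOn H (Ici T) := fun t ht => (hT t ht).1.continuousAt.continuousWithinAt
  have hdiff : DifferentiableOn ℝ H (interior (Ici T)) := fun t ht =>
    (hT t (interior_subset ht)).1.differentiableAt.differentiableWithinAt
  have hderiv : ∀ t ∈ interior (Ici T), deriv H t ∈ Icc a b := fun t ht => by
    rw [(hT t (interior_subset ht)).1.deriv]; exact (hT t (interior_subset ht)).2
  constructor
  · filter_upwards [eventually_ge_atTop T, eventually_ge_atTop (2 * (a * T - H T) / a)]
      with t hTt ht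
    have h := (convex_Ici T).mul_sub_le_image_sub_of_le_deriv hcont hdiff
      (fun s hs => (hderiv s hs).1) T self_mem_Ici t hTt hTt
    have := (div_le_iff₀ ha).mp ht
    linarith
  · filter_upwards [eventually_ge_atTop T, eventually_ge_atTop (H T - b * T)] with t hTt ht
    have h := (convex_Ici T).image_sub_le_mul_sub_of_deriv_le hcont hdiff
      (fun s hs => (hderiv s hs).2) T self_mem_Ici t hTt hTt
    linarith

theorem stmt_11_general (Phi : ℝ → ℝ)
    (hPhi : ∀ x, Phi x = ∫ ζ in Ioi x, (Real.sqrt (2 * Real.pi))⁻¹ * Real.exp (-ζ ^ 2 / 2))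
    (f : ℝ → ℝ)
    (hode : ∃ t₀, ∀ t ≥ t₀, HasDerivAt f (Phi (f t)) t)
    (hftop : Tendsto f atTop atTop) :
    Tendsto (fun t => f t / Real.sqrt (2 * Real.log t)) atTop (nhds 1) := by
  obtain ⟨t₀, hode⟩ := hode
  set c := (√(2 * π))⁻¹
  have hc : 0 < c := by positivity
  have hH : ∀ᶠ t in atTop, HasDerivAt (fun t => exp (f t ^ 2 / 2))
      (c * (f t * exp (f t ^ 2 / 2) * ∫ ζ in Ioi (f t), exp (-ζ ^ 2 / 2))) t ∧
      c * (f t * exp (f t ^ 2 / 2) * ∫ ζ in Ioi (f t), exp (-ζ ^ 2 / 2)) ∈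
        Icc (c * exp (-3 / 2)) c := by
    filter_upwards [eventually_ge_atTop t₀, hftop.eventually_ge_atTop 1] with t ht hft
    refine ⟨?_, ?_⟩
    · refine (((hode t ht).pow 2).div_const 2).exp.congr_deriv ?_
      rw [hPhi, integral_const_mul]
      simp only [Pi.pow_apply]
      push_cast
      ring
    · obtain ⟨hlow, hup⟩ := mul_exp_mul_integral_Ioi_mem_Icc hft
      exact ⟨by gcongr, mul_le_of_le_one_right hc.le hup⟩
  obtain ⟨hlow, hup⟩ := linear_bounds_of_deriv_mem_Icc (by positivity) hH
  have hlog := tendsto_log_div_log_of_linear_bounds (by positivity) hlow hup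
  simp only [log_exp, div_div] at hlog
  refine (sqrt_one ▸ hlog.sqrt).congr' ?_
  filter_upwards [hftop.eventually_ge_atTop 0, eventually_ge_atTop 1] with t hft ht
  rw [sqrt_div' _ (by have := log_nonneg ht; positivity), sqrt_sq hft]

theorem stmt_11 (Phi : ℝ → ℝ)
    (hPhi : ∀ x, Phi x = ∫ ζ in Ioi x, (Real.sqrt (2 * Real.pi))⁻¹ * Real.exp (-ζ ^ 2 / 2))
    (f : ℝ → ℝ) (hfpos : ∀ t, 0 < t → 0 < f t)
    (hode : ∃ t₀, ∀ t ≥ t₀, HasDerivAt f (Phi (f t)) t)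
    (hftop : Tendsto f atTop atTop) :
    Tendsto (fun t => f t / Real.sqrt (2 * Real.log t)) atTop (nhds 1) :=
  stmt_11_general Phi hPhi f hode hftop
end
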